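/- arXiv:0812.4475 — 3 statements merged into one kernel-verified Lean document; each statement's English description precedes it below -/
import Mathlib

section
/- Let C, ε > 0 and let f : (−ε, 1+ε) → ℝ be a non-constant real analytic function such that f'(s)² ≤ C·f''(s) for every s ∈ [0,1]. Then f is strictly convex on (0,1), and moreover there is at most one point α ∈ (0,1) where f''(α) = 0. -/
/-! Since `C > 0`, the inequality forces `f'' ≥ 0` on `[0,1]`, so `f'` is monotone there. If `f'`
took the same value at two points it would be constant on the interval between them, hence, by
the identity theorem for the analytic function `f'`, on the whole domain; then `f'' ≡ 0`, the
inequality gives `f' ≡ 0`, and `f` would be constant. So `f'` is strictly increasing on `[0,1]`,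
which is strict convexity. At a zero of `f''` the inequality forces `f' = 0`, and a strictly
increasing `f'` vanishes at most once. -/

open Set Filter

theorem MonotoneOn.eqOn_Icc_of_eq {α β : Type*} [Preorder α] [PartialOrder β] {h : α → β}
    {s : Set α} (hmono : MonotoneOn h s) (hs : s.OrdConnected) {a b : α} (ha : a ∈ s)
    (hb : b ∈ s) (hab : h a = h b) : EqOn h (fun _ => h a) (Icc a b) := fun x hx =>
  have hxs : x ∈ s := hs.out ha hb hx
  le_antisymm (hab ▸ hmono hxs hb hx.2) (hmono ha hxs hx.1)

theorem AnalyticOnNhd.eqOn_const_of_eqOn_Icc {E : Type*} [NormedAddCommGroup E]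
    [NormedSpace ℝ E] {g : ℝ → E} {U : Set ℝ} (hg : AnalyticOnNhd ℝ g U) (hU : IsPreconnected U)
    {a b : ℝ} (hab : a < b) (hsub : Icc a b ⊆ U) {c : E} (h : EqOn g (fun _ => c) (Icc a b)) :
    EqOn g (fun _ => c) U := by
  have hmid : (a + b) / 2 ∈ Ioo a b := ⟨by linarith, by linarith⟩
  exact hg.eqOn_of_preconnected_of_eventuallyEq analyticOnNhd_const hU
    (hsub (Ioo_subset_Icc_self hmid)) (eventuallyEq_of_mem (Icc_mem_nhds hmid.1 hmid.2) h)

theorem deriv_eq_zero_of_sq_le_mul_deriv_deriv {f : ℝ → ℝ} {C x : ℝ}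
    (hineq : deriv f x ^ 2 ≤ C * deriv (deriv f) x) (hx : deriv (deriv f) x = 0) :
    deriv f x = 0 := by
  rw [hx, mul_zero] at hineq
  exact pow_eq_zero_iff two_ne_zero |>.1 (le_antisymm hineq (sq_nonneg _))

theorem strictMonoOn_deriv_of_sq_le_mul_deriv_deriv {f : ℝ → ℝ} {U s : Set ℝ} {C : ℝ}
    (hU : IsOpen U) (hU' : IsPreconnected U) (hf : AnalyticOnNhd ℝ f U)
    (hnc : ¬ ∀ x ∈ U, ∀ y ∈ U, f x = f y) (hs : s.OrdConnected) (hsU : s ⊆ U) (hC : 0 < C)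
    (hineq : ∀ x ∈ s, deriv f x ^ 2 ≤ C * deriv (deriv f) x) : StrictMonoOn (deriv f) s := by
  have hf' : AnalyticOnNhd ℝ (deriv f) U := hf.deriv
  have hmono : MonotoneOn (deriv f) s := by
    refine monotoneOn_of_deriv_nonneg hs.convex
      (fun x hx => (hf' x (hsU hx)).continuousAt.continuousWithinAt)
      (fun x hx => (hf' x (hsU (interior_subset hx))).differentiableAt.differentiableWithinAt)
      (fun x hx => ?_)
    have := hineq x (interior_subset hx)
    nlinarith [sq_nonneg (deriv f x)]
  refine hmono.strictMonoOn_of_injOn fun a ha b hb hab => ?_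
  by_contra hne
  wlog hlt : a < b generalizing a b
  · exact this b hb a ha hab.symm (Ne.symm hne) (lt_of_le_of_ne (not_lt.1 hlt) (Ne.symm hne))
  have hconst : EqOn (deriv f) (fun _ => deriv f a) U :=
    hf'.eqOn_const_of_eqOn_Icc hU' hlt ((hs.out ha hb).trans hsU)
      (hmono.eqOn_Icc_of_eq hs ha hb hab)
  have hf'' : EqOn (deriv (deriv f)) 0 U := fun x hx => by
    rw [(eventuallyEq_of_mem (hU.mem_nhds hx) hconst).deriv_eq, deriv_const, Pi.zero_apply]
  have hf'a : deriv f a = 0 := deriv_eq_zero_of_sq_le_mul_deriv_deriv (hineq a ha) (hf'' (hsU ha))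
  refine hnc fun x hx y hy => hU.is_const_of_deriv_eq_zero hU'
    (fun z hz => (hf z hz).differentiableAt.differentiableWithinAt) (fun z hz => ?_) hx hy
  rw [hconst hz, hf'a, Pi.zero_apply]

/-- Lemma 2.4: a non-constant real-analytic function on `(-ε, 1+ε)` with
`f'(s)² ≤ C·f''(s)` on `[0,1]` is strictly convex on `(0,1)`, and `f''` vanishes
at most once in `(0,1)`. -/
theorem stmt2 (C ε : ℝ) (hC : 0 < C) (hε : 0 < ε) (f : ℝ → ℝ)
    (hf : AnalyticOnNhd ℝ f (Set.Ioo (-ε) (1 + ε)))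
    (hnc : ¬ ∀ x ∈ Set.Ioo (-ε) (1 + ε), ∀ y ∈ Set.Ioo (-ε) (1 + ε), f x = f y)
    (hineq : ∀ s ∈ Set.Icc (0:ℝ) 1, (deriv f s) ^ 2 ≤ C * deriv (deriv f) s) :
    StrictConvexOn ℝ (Set.Ioo (0:ℝ) 1) f ∧
      ∀ a ∈ Set.Ioo (0:ℝ) 1, ∀ b ∈ Set.Ioo (0:ℝ) 1,
        deriv (deriv f) a = 0 → deriv (deriv f) b = 0 → a = b := by
  have hsub : Icc (0:ℝ) 1 ⊆ Ioo (-ε) (1 + ε) := Icc_subset_Ioo (by linarith) (by linarith)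
  have hstrict : StrictMonoOn (deriv f) (Ioo (0:ℝ) 1) :=
    (strictMonoOn_deriv_of_sq_le_mul_deriv_deriv isOpen_Ioo (convex_Ioo _ _).isPreconnected hf
      hnc ordConnected_Icc hsub hC hineq).mono Ioo_subset_Icc_self
  refine ⟨StrictMonoOn.strictConvexOn_of_deriv (convex_Ioo 0 1) ?_ ?_,
    fun a ha b hb hfa hfb => ?_⟩
  · exact fun x hx => (hf x (hsub (Ioo_subset_Icc_self hx))).continuousAt.continuousWithinAt
  · rwa [interior_Ioo]
  · refine hstrict.injOn ha hb ?_
    rw [deriv_eq_zero_of_sq_le_mul_deriv_deriv (hineq a (Ioo_subset_Icc_self ha)) hfa,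
      deriv_eq_zero_of_sq_le_mul_deriv_deriv (hineq b (Ioo_subset_Icc_self hb)) hfb]
end

section
/- Let A be a bounded self-adjoint operator on the complex Hilbert space H, and let δ_A : K(H)_ah → K(H)_h be defined by δ_A(x) = xA − Ax, where K(H)_ah (resp. K(H)_h) denotes the compact anti-hermitian (resp. compact hermitian) operators. Then δ_A has closed range if and only if the spectrum of A is finite. Moreover, when the spectrum of A is finite, δ_A splits: its kernel and its range are closed complemented subspaces of K(H)_ah and K(H)_h respectively. -/
/-!
If the spectrum of `A` is infinite, it contains distinct points `l`, `m` arbitrarily close to each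
other. For unit approximate eigenvectors `ξ`, `η` of `l`, `m`, the compact anti-hermitian operator
`x = ξ ⊗ η* - η ⊗ ξ*` has `‖δ_A x‖ = O(|l - m|)` but stays at distance at least `1/4` from the
commutant of `A`: for `k` commuting with `A`, `(l - m) ⟪ξ, k η⟫` is bounded by the defects of the
approximate eigenvectors, so `⟪ξ, k η⟫` is small, while `⟪ξ, x η⟫ = 1 - ⟪ξ, η⟫²` is close to `1`.
By the open mapping theorem the range of `δ_A` therefore cannot be closed.

If the spectrum is finite, the spectral projections `P_λ` give the idempotent pinching
`E x = ∑ P_λ x P_λ`, whose fixed points form the commutant of `A`. Since `δ_A` multiplies the block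
`P_λ x P_μ` by `μ - λ`, it kills the range of `E` and can be inverted block by block on `ker E`.
Hence `ker δ_A = range E` and `δ_A(K(H)_ah) = K(H)_h ∩ ker E`, and `ker E`, `range E` provide the
closed complements.
-/

set_option synthInstance.maxHeartbeats 1000000
set_option maxHeartbeats 1000000
noncomputable section

variable {H : Type*} [NormedAddCommGroup H] [InnerProductSpace ℂ H] [CompleteSpace H]

/-- The real subspace of compact anti-hermitian operators `K(H)_ah`. -/
def Kah (H : Type*) [NormedAddCommGroup H] [InnerProductSpace ℂ H] [CompleteSpace H] :
    Submodule ℝ (H →L[ℂ] H) where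
  carrier := {x | IsCompactOperator ⇑x ∧ star x = -x}
  add_mem' := by
    rintro x y ⟨hxc, hxa⟩ ⟨hyc, hya⟩
    refine ⟨by simpa using hxc.add hyc, ?_⟩
    rw [star_add, hxa, hya, neg_add]
  zero_mem' := ⟨by simpa using (isCompactOperator_zero : IsCompactOperator (0 : H → H)), by simp⟩
  smul_mem' := by
    rintro c x ⟨hxc, hxa⟩
    refine ⟨by simpa using hxc.smul c, ?_⟩
    rw [star_smul, hxa, star_trivial, smul_neg]

/-- The real subspace of compact hermitian operators `K(H)_h`. -/
def Kh (H : Type*) [NormedAddCommGroup H] [InnerProductSpace ℂ H] [CompleteSpace H] :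
    Submodule ℝ (H →L[ℂ] H) where
  carrier := {x | IsCompactOperator ⇑x ∧ star x = x}
  add_mem' := by
    rintro x y ⟨hxc, hxa⟩ ⟨hyc, hya⟩
    exact ⟨by simpa using hxc.add hyc, by rw [star_add, hxa, hya]⟩
  zero_mem' := ⟨by simpa using (isCompactOperator_zero : IsCompactOperator (0 : H → H)), by simp⟩
  smul_mem' := by
    rintro c x ⟨hxc, hxa⟩
    exact ⟨by simpa using hxc.smul c, by rw [star_smul, hxa, star_trivial]⟩

/-- The inner derivation `δ_A(x) = xA - Ax`, as a real-linear map. -/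
def deltaMap (A : H →L[ℂ] H) : (H →L[ℂ] H) →ₗ[ℝ] (H →L[ℂ] H) where
  toFun x := x * A - A * x
  map_add' x y := by noncomm_ring
  map_smul' c x := by simp [smul_sub, smul_mul_assoc, mul_smul_comm]


open ContinuousLinearMap InnerProductSpace

theorem IsCompact.exists_ne_dist_lt_of_infinite {X : Type*} [MetricSpace X] {s : Set X}
    (hs : IsCompact s) (hinf : s.Infinite) {ε : ℝ} (hε : 0 < ε) :
    ∃ x ∈ s, ∃ y ∈ s, x ≠ y ∧ dist x y < ε := by
  obtain ⟨a, -, ha⟩ := hinf.exists_accPt_of_subset_isCompact hs subset_rfl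
  obtain ⟨x, ⟨hxa, hx⟩, y, ⟨hya, hy⟩, hxy⟩ :=
    (Set.Infinite.of_accPt (ha.nhds_inter (Metric.ball_mem_nhds a (half_pos hε)))).nontrivial
  refine ⟨x, hx, y, hy, hxy, ?_⟩
  calc dist x y ≤ dist x a + dist y a := dist_triangle_right x y a
    _ < ε / 2 + ε / 2 := add_lt_add hxa hya
    _ = ε := add_halves ε

section ClosedComplement

variable {R M : Type*} [Ring R] [AddCommGroup M] [Module R M] [TopologicalSpace M]

def HasClosedComplementIn (q p : Submodule R M) : Prop :=
  ∃ S : Submodule R M, S ≤ p ∧ IsClosed (S : Set M) ∧ S ⊓ q = ⊥ ∧ S ⊔ q = p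

theorem Submodule.isClosed_inf_ker {N : Type*} [AddCommGroup N] [Module R N] [TopologicalSpace N]
    [T1Space N] {p : Submodule R M} (hp : IsClosed (p : Set M)) {f : M →ₗ[R] N}
    (hf : Continuous f) :
    IsClosed ((p ⊓ LinearMap.ker f : Submodule R M) : Set M) :=
  hp.inter (isClosed_singleton.preimage hf)

theorem hasClosedComplementIn_inf_ker [T1Space M] [IsTopologicalAddGroup M] {E : M →L[R] M}
    (hE : IsIdempotentElem E) {p : Submodule R M} (hp : IsClosed (p : Set M))
    (hpE : ∀ x ∈ p, E x ∈ p) :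
    HasClosedComplementIn (p ⊓ LinearMap.ker (E : M →ₗ[R] M)) p := by
  have hEE (x : M) : E (E x) = E x := DFunLike.congr_fun hE x
  refine ⟨p ⊓ LinearMap.ker ((1 - E : M →L[R] M) : M →ₗ[R] M), inf_le_left,
    p.isClosed_inf_ker hp (1 - E).continuous, ?_, ?_⟩
  · rw [eq_bot_iff]
    rintro x ⟨⟨-, hx₁⟩, -, hx₂⟩
    simp only [SetLike.mem_coe, LinearMap.mem_ker] at hx₁ hx₂
    simpa [hx₂] using hx₁
  · refine le_antisymm (sup_le inf_le_left inf_le_left) fun x hx => ?_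
    refine Submodule.mem_sup.mpr ⟨E x, ⟨hpE x hx, ?_⟩, x - E x, ⟨p.sub_mem hx (hpE x hx), ?_⟩,
      add_sub_cancel _ _⟩
    · simp [hEE]
    · simp [hEE]

end ClosedComplement

theorem IsSelfAdjoint.conj_eq_of_mem_spectrum {R : Type*} [CStarAlgebra R] {a : R}
    (ha : IsSelfAdjoint a) {l : ℂ} (hl : l ∈ spectrum ℂ a) : starRingEnd ℂ l = l :=
  Complex.conj_eq_iff_im.mpr (ha.im_eq_zero_of_mem_spectrum hl)

namespace IsSelfAdjoint

variable {T A : H →L[ℂ] H}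

theorem isUnit_of_norm_le_mul (hT : IsSelfAdjoint T) {K : NNReal}
    (hK : ∀ x, ‖x‖ ≤ K * ‖T x‖) : IsUnit T := by
  have hanti : AntilipschitzWith K T := T.antilipschitz_of_bound hK
  rw [isUnit_iff_bijective, bijective_iff_dense_range_and_antilipschitz]
  refine ⟨?_, K, hanti⟩
  have hker : LinearMap.ker (T : H →ₗ[ℂ] H) = ⊥ := LinearMap.ker_eq_bot.mpr hanti.injective
  have := T.orthogonal_ker
  rw [hT.adjoint_eq, hker, Submodule.bot_orthogonal_eq_top] at this
  exact this.symm

theorem exists_norm_sub_smul_lt (hA : IsSelfAdjoint A) {l : ℂ} (hl : l ∈ spectrum ℂ A)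
    {ε : ℝ} (hε : 0 < ε) : ∃ ξ : H, ‖ξ‖ = 1 ∧ ‖A ξ - l • ξ‖ < ε := by
  by_contra! h
  refine spectrum.mem_iff.mp hl (isUnit_of_norm_le_mul (K := ⟨ε⁻¹, by positivity⟩) ?_ fun x => ?_)
  · exact (IsSelfAdjoint.algebraMap _ (hA.conj_eq_of_mem_spectrum hl)).sub hA
  · rcases eq_or_ne x 0 with rfl | hx
    · simp
    have hx₀ : 0 < ‖x‖ := norm_pos_iff.mpr hx
    have key := h ((‖x‖⁻¹ : ℂ) • x) (norm_smul_inv_norm hx)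
    rw [map_smul, smul_comm l, ← smul_sub, norm_smul, norm_inv, Complex.norm_real, norm_norm,
      le_inv_mul_iff₀ hx₀] at key
    have hx' : ((algebraMap ℂ (H →L[ℂ] H)) l - A) x = -(A x - l • x) := by
      simp [Algebra.algebraMap_eq_smul_one]
    change ‖x‖ ≤ ε⁻¹ * _
    rw [hx', norm_neg, le_inv_mul_iff₀ hε]
    linarith

end IsSelfAdjoint

theorem isCompactOperator_rankOne {𝕜 E F : Type*} [RCLike 𝕜] [NormedAddCommGroup E]
    [InnerProductSpace 𝕜 E] [NormedAddCommGroup F] [InnerProductSpace 𝕜 F] (x : E) (y : F) :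
    IsCompactOperator (rankOne 𝕜 x y) := by
  rw [rankOne_def']
  exact (isCompactOperator_of_locallyCompactSpace_rng (toSpanSingleton 𝕜 x)).comp_clm _

theorem star_rankOne (x y : H) : star (rankOne ℂ x y) = rankOne ℂ y x :=
  adjoint_rankOne x y

section Commutator

variable {E : Type*} [NormedAddCommGroup E] [InnerProductSpace ℂ E] {A : E →L[ℂ] E}

theorem deltaMap_apply (x : E →L[ℂ] E) : deltaMap A x = x * A - A * x := rfl

theorem deltaMap_eq_zero_iff {x : E →L[ℂ] E} : deltaMap A x = 0 ↔ Commute x A := sub_eq_zero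

theorem continuous_deltaMap (A : E →L[ℂ] E) : Continuous (deltaMap A) :=
  (continuous_id.mul continuous_const).sub (continuous_const.mul continuous_id)

end Commutator

section InfiniteSpectrum

variable {A : H →L[ℂ] H}

theorem deltaMap_rankOne (hA : IsSelfAdjoint A) (x y : H) :
    deltaMap A (rankOne ℂ x y) = rankOne ℂ x (A y) - rankOne ℂ (A x) y := by
  rw [deltaMap_apply, mul_def, mul_def, rankOne_comp, comp_rankOne, hA.adjoint_eq]

theorem norm_deltaMap_rankOne_le (hA : IsSelfAdjoint A) (l : ℂ) {m : ℂ} (hm : starRingEnd ℂ m = m)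
    {ξ η : H} (hξ : ‖ξ‖ = 1) (hη : ‖η‖ = 1) :
    ‖deltaMap A (rankOne ℂ ξ η)‖ ≤ ‖l - m‖ + ‖A ξ - l • ξ‖ + ‖A η - m • η‖ := by
  have hsplit : deltaMap A (rankOne ℂ ξ η) =
      rankOne ℂ ξ (A η - m • η) - rankOne ℂ (A ξ - l • ξ) η - (l - m) • rankOne ℂ ξ η := by
    simp only [deltaMap_rankOne hA, map_sub, map_smul, map_smulₛₗ, hm, sub_apply, smul_apply]
    module
  rw [hsplit]
  refine (norm_sub_le _ _).trans ((add_le_add_left (norm_sub_le _ _) _).trans ?_)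
  simp only [norm_rankOne, norm_smul, hξ, hη, one_mul, mul_one]
  linarith

theorem norm_sub_mul_norm_inner_le (hA : IsSelfAdjoint A) {k : H →L[ℂ] H} (hk : Commute k A)
    {l : ℂ} (hl : starRingEnd ℂ l = l) (m : ℂ) {ξ η : H} (hξ : ‖ξ‖ = 1) (hη : ‖η‖ = 1) :
    ‖l - m‖ * ‖⟪ξ, k η⟫_ℂ‖ ≤ ‖k‖ * (‖A ξ - l • ξ‖ + ‖A η - m • η‖) := by
  have hkA : ⟪ξ, k (A η)⟫_ℂ = ⟪A ξ, k η⟫_ℂ :=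
    (congrArg _ (DFunLike.congr_fun hk.eq η)).trans (hA.isSymmetric ξ (k η)).symm
  have key : (l - m) * ⟪ξ, k η⟫_ℂ = ⟪ξ, k (A η - m • η)⟫_ℂ - ⟪A ξ - l • ξ, k η⟫_ℂ := by
    rw [map_sub, map_smul, inner_sub_right, inner_sub_left, inner_smul_right, inner_smul_left, hl,
      hkA]
    ring
  rw [← norm_mul, key]
  calc ‖⟪ξ, k (A η - m • η)⟫_ℂ - ⟪A ξ - l • ξ, k η⟫_ℂ‖
      ≤ ‖ξ‖ * (‖k‖ * ‖A η - m • η‖) + ‖A ξ - l • ξ‖ * (‖k‖ * ‖η‖) := by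
        refine (norm_sub_le _ _).trans (add_le_add ?_ ?_) <;>
          exact (norm_inner_le_norm _ _).trans (by gcongr; exact k.le_opNorm _)
    _ = ‖k‖ * (‖A ξ - l • ξ‖ + ‖A η - m • η‖) := by rw [hξ, hη]; ring

theorem isClosed_Kah : IsClosed (Kah H : Set (H →L[ℂ] H)) :=
  isClosed_setOfPred_isCompactOperator.inter (isClosed_eq continuous_star continuous_neg)

theorem isClosed_Kh : IsClosed (Kh H : Set (H →L[ℂ] H)) :=
  isClosed_setOfPred_isCompactOperator.inter (isClosed_eq continuous_star continuous_id)

theorem quarter_le_norm_rankOne_sub_rankOne_sub (hA : IsSelfAdjoint A) {l m : ℂ}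
    (hl : starRingEnd ℂ l = l) (hlm : l ≠ m) {ξ η : H} (hξ : ‖ξ‖ = 1) (hη : ‖η‖ = 1)
    (hξl : ‖A ξ - l • ξ‖ ≤ ‖l - m‖ / 8) (hηm : ‖A η - m • η‖ ≤ ‖l - m‖ / 8)
    {k : H →L[ℂ] H} (hk : Commute k A) :
    1 / 4 ≤ ‖rankOne ℂ ξ η - rankOne ℂ η ξ - k‖ := by
  have hd : 0 < ‖l - m‖ := norm_pos_iff.mpr (sub_ne_zero.mpr hlm)
  set x := rankOne ℂ ξ η - rankOne ℂ η ξ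
  have hinner {k' : H →L[ℂ] H} (hk' : Commute k' A) : ‖⟪ξ, k' η⟫_ℂ‖ ≤ ‖k'‖ / 4 := by
    have := norm_sub_mul_norm_inner_le hA hk' hl m hξ hη
    refine le_of_mul_le_mul_left ?_ hd
    nlinarith [norm_nonneg k']
  have hξη : ‖⟪ξ, η⟫_ℂ‖ ≤ 1 / 4 :=
    (hinner (Commute.one_left A)).trans (by gcongr; exact norm_id_le)
  have hxη : ⟪ξ, x η⟫_ℂ = 1 - ⟪ξ, η⟫_ℂ ^ 2 := by
    simp [x, inner_self_eq_norm_sq_to_K, hξ, hη]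
    ring
  have hlow : 15 / 16 ≤ ‖⟪ξ, x η⟫_ℂ‖ := by
    have := norm_sub_norm_le (1 : ℂ) (⟪ξ, η⟫_ℂ ^ 2)
    rw [norm_one, norm_pow] at this
    rw [hxη]
    nlinarith [norm_nonneg ⟪ξ, η⟫_ℂ]
  have hup : ‖⟪ξ, x η⟫_ℂ‖ ≤ ‖k‖ / 4 + ‖x - k‖ := by
    have : ⟪ξ, x η⟫_ℂ = ⟪ξ, k η⟫_ℂ + ⟪ξ, (x - k) η⟫_ℂ := by
      rw [← inner_add_right, ← add_apply, add_sub_cancel]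
    rw [this]
    refine (norm_add_le _ _).trans (add_le_add (hinner hk) ((norm_inner_le_norm _ _).trans ?_))
    simpa [hξ, hη] using (x - k).le_opNorm η
  have hx : ‖x‖ ≤ 2 := by
    have := norm_sub_le (rankOne ℂ ξ η) (rankOne ℂ η ξ)
    simp only [norm_rankOne, hξ, hη, mul_one] at this
    linarith
  have hkx : ‖k‖ ≤ ‖x‖ + ‖x - k‖ := by simpa using norm_sub_le x (x - k)
  linarith

theorem exists_mem_Kah_far_from_commute (hA : IsSelfAdjoint A) {l m : ℂ}
    (hl : l ∈ spectrum ℂ A) (hm : m ∈ spectrum ℂ A) (hlm : l ≠ m) :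
    ∃ x ∈ Kah H, ‖deltaMap A x‖ ≤ 3 * ‖l - m‖ ∧
      ∀ k : H →L[ℂ] H, Commute k A → 1 / 4 ≤ ‖x - k‖ := by
  have hd : 0 < ‖l - m‖ / 8 := by have := norm_pos_iff.mpr (sub_ne_zero.mpr hlm); positivity
  obtain ⟨ξ, hξ, hξl⟩ := hA.exists_norm_sub_smul_lt hl hd
  obtain ⟨η, hη, hηm⟩ := hA.exists_norm_sub_smul_lt hm hd
  have hl' := hA.conj_eq_of_mem_spectrum hl
  have hm' := hA.conj_eq_of_mem_spectrum hm
  refine ⟨rankOne ℂ ξ η - rankOne ℂ η ξ, ⟨?_, ?_⟩, ?_, fun k hk =>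
    quarter_le_norm_rankOne_sub_rankOne_sub hA hl' hlm hξ hη hξl.le hηm.le hk⟩
  · exact (isCompactOperator_rankOne ξ η).sub (isCompactOperator_rankOne η ξ)
  · rw [star_sub, star_rankOne, star_rankOne, neg_sub]
  · have h₁ := norm_deltaMap_rankOne_le hA l hm' hξ hη
    have h₂ := norm_deltaMap_rankOne_le hA m hl' hη hξ
    rw [norm_sub_rev m l] at h₂
    rw [map_sub]
    linarith [norm_sub_le (deltaMap A (rankOne ℂ ξ η)) (deltaMap A (rankOne ℂ η ξ))]

theorem exists_commute_norm_sub_le_of_isClosed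
    (hcl : IsClosed ((Kah H).map (deltaMap A) : Set (H →L[ℂ] H))) :
    ∃ C > 0, ∀ x ∈ Kah H, ∃ k : H →L[ℂ] H, Commute k A ∧ ‖x - k‖ ≤ C * ‖deltaMap A x‖ := by
  have : CompleteSpace (Kah H) := isClosed_Kah.completeSpace_coe
  have : CompleteSpace ((Kah H).map (deltaMap A)) := hcl.completeSpace_coe
  let F : Kah H →L[ℝ] (Kah H).map (deltaMap A) :=
    ⟨(deltaMap A).submoduleMap (Kah H),
      ((continuous_deltaMap A).comp continuous_subtype_val).subtype_mk _⟩
  obtain ⟨C, hC, hF⟩ := F.exists_preimage_norm_le ((deltaMap A).submoduleMap_surjective _)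
  refine ⟨C, hC, fun x hx => ?_⟩
  obtain ⟨z, hz, hzC⟩ := hF (F ⟨x, hx⟩)
  refine ⟨x - z, deltaMap_eq_zero_iff.mp ?_, by rw [sub_sub_cancel]; exact hzC⟩
  rw [map_sub, sub_eq_zero]
  exact (congrArg Subtype.val hz).symm

theorem spectrum_finite_of_isClosed (hA : IsSelfAdjoint A)
    (hcl : IsClosed ((Kah H).map (deltaMap A) : Set (H →L[ℂ] H))) : (spectrum ℂ A).Finite := by
  by_contra hinf
  obtain ⟨C, hC, hCx⟩ := exists_commute_norm_sub_le_of_isClosed hcl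
  obtain ⟨l, hl, m, hm, hlm, hdist⟩ := (spectrum.isCompact A).exists_ne_dist_lt_of_infinite hinf
    (show 0 < 1 / (12 * C) by positivity)
  obtain ⟨x, hx, hδx, hfar⟩ := exists_mem_Kah_far_from_commute hA hl hm hlm
  obtain ⟨k, hk, hxk⟩ := hCx x hx
  rw [dist_eq_norm, lt_div_iff₀ (by positivity)] at hdist
  nlinarith [hfar k hk]

end InfiniteSpectrum

section SpectralProjection

variable {R : Type*} [CStarAlgebra R] {a : R}

/-- Only meaningful when the spectrum of `a` is finite: otherwise the indicator of `{l}` need not be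
continuous on it, and `cfc` returns its junk value `0`. -/
def spectralProjection (a : R) (l : ℂ) : R := cfc (fun z => if z = l then (1 : ℂ) else 0) a

theorem isSelfAdjoint_spectralProjection (a : R) (l : ℂ) :
    IsSelfAdjoint (spectralProjection a l) := by
  rw [IsSelfAdjoint, spectralProjection, ← cfc_star]
  congr! 2 with z
  split_ifs <;> simp

theorem spectralProjection_mul_spectralProjection (hfin : (spectrum ℂ a).Finite) (l l' : ℂ) :
    spectralProjection a l * spectralProjection a l' =
      if l = l' then spectralProjection a l else 0 := by
  rw [spectralProjection, spectralProjection,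
    ← cfc_mul _ _ a (hfin.continuousOn _) (hfin.continuousOn _)]
  split_ifs with h
  · subst h
    congr! 2 with z
    split_ifs <;> simp
  · rw [← cfc_zero ℂ a]
    congr! 2 with z
    split_ifs <;> simp_all

theorem sum_spectralProjection [IsStarNormal a] (hfin : (spectrum ℂ a).Finite) :
    ∑ l ∈ hfin.toFinset, spectralProjection a l = 1 := by
  simp only [spectralProjection]
  rw [← cfc_one ℂ a,
    ← cfc_sum (fun l z => if z = l then (1 : ℂ) else 0) a _ fun l _ => hfin.continuousOn _]
  refine cfc_congr fun z hz => ?_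
  simp [Finset.sum_apply, hfin.mem_toFinset.mpr hz]

theorem mul_spectralProjection [IsStarNormal a] (hfin : (spectrum ℂ a).Finite) (l : ℂ) :
    a * spectralProjection a l = l • spectralProjection a l := by
  calc a * spectralProjection a l = cfc (fun z => z) a * spectralProjection a l := by
        rw [cfc_id' ℂ a]
    _ = l • spectralProjection a l := by
        rw [spectralProjection, ← cfc_mul _ _ a (hfin.continuousOn _) (hfin.continuousOn _),
          ← cfc_const_mul _ _ a (hfin.continuousOn _)]
        congr! 2 with z
        split_ifs with h <;> simp [h]

theorem spectralProjection_mul [IsStarNormal a] (hfin : (spectrum ℂ a).Finite) (l : ℂ) :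
    spectralProjection a l * a = l • spectralProjection a l := by
  rw [← mul_spectralProjection hfin l]
  exact ((Commute.refl a).cfc (star_comm_self' a) _).eq

theorem spectralProjection_mul_mul_spectralProjection_commutator [IsStarNormal a]
    (hfin : (spectrum ℂ a).Finite) (l l' : ℂ) (y : R) :
    spectralProjection a l * y * spectralProjection a l' * a -
        a * (spectralProjection a l * y * spectralProjection a l') =
      (l' - l) • (spectralProjection a l * y * spectralProjection a l') := by
  rw [mul_assoc, spectralProjection_mul hfin, ← mul_assoc, ← mul_assoc,
    mul_spectralProjection hfin]
  simp only [mul_smul_comm, smul_mul_assoc, sub_smul]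

theorem IsSelfAdjoint.commute_spectralProjection (ha : IsSelfAdjoint a) {b : R}
    (hb : Commute a b) (l : ℂ) : Commute (spectralProjection a l) b :=
  ha.commute_cfc hb _

end SpectralProjection

section Pinching

variable {R : Type*} [CStarAlgebra R] {a : R} (hfin : (spectrum ℂ a).Finite)

local notation "P" => spectralProjection a
local notation "σ" => hfin.toFinset

def pinching : R →L[ℝ] R := ∑ l ∈ σ, mulLeftRight ℝ R (P l) (P l)

theorem pinching_apply (x : R) : pinching hfin x = ∑ l ∈ σ, P l * x * P l := by
  simp [pinching]

theorem commute_pinching [IsStarNormal a] (x : R) : Commute (pinching hfin x) a := by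
  rw [pinching_apply]
  refine Commute.sum_left _ _ _ fun l _ => sub_eq_zero.mp ?_
  simpa using spectralProjection_mul_mul_spectralProjection_commutator hfin l l x

theorem pinching_eq_self (ha : IsSelfAdjoint a) {x : R} (hx : Commute x a) :
    pinching hfin x = x := by
  have := ha.isStarNormal
  calc pinching hfin x = ∑ l ∈ σ, x * P l := by
        refine (pinching_apply hfin x).trans (Finset.sum_congr rfl fun l _ => ?_)
        rw [(ha.commute_spectralProjection hx.symm l).eq, mul_assoc,
          spectralProjection_mul_spectralProjection hfin, if_pos rfl]
    _ = x := by rw [← Finset.mul_sum, sum_spectralProjection hfin, mul_one]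

theorem isIdempotentElem_pinching (ha : IsSelfAdjoint a) : IsIdempotentElem (pinching hfin) :=
  have := ha.isStarNormal
  ContinuousLinearMap.ext fun x => pinching_eq_self hfin ha (commute_pinching hfin x)

theorem pinching_mul_sub_mul [IsStarNormal a] (x : R) : pinching hfin (x * a - a * x) = 0 := by
  rw [pinching_apply]
  refine Finset.sum_eq_zero fun l _ => ?_
  have h₁ : P l * (x * a) * P l = l • (P l * x * P l) := by
    rw [mul_assoc, mul_assoc, mul_spectralProjection hfin, mul_smul_comm, mul_smul_comm, mul_assoc]
  have h₂ : P l * (a * x) * P l = l • (P l * x * P l) := by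
    rw [← mul_assoc, spectralProjection_mul hfin, smul_mul_assoc, smul_mul_assoc]
  rw [mul_sub, sub_mul, h₁, h₂, sub_self]

theorem star_pinching (x : R) : star (pinching hfin x) = pinching hfin (star x) := by
  simp only [pinching_apply, star_sum, star_mul, (isSelfAdjoint_spectralProjection a _).star_eq,
    mul_assoc]

/-- The diagonal blocks drop out because `(l - l)⁻¹ = 0`. -/
def commutatorInverse (y : R) : R :=
  ∑ l ∈ σ, ∑ l' ∈ σ, (l' - l)⁻¹ • (P l * y * P l')

theorem commutatorInverse_mul_sub [IsStarNormal a] {y : R} (hy : pinching hfin y = 0) :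
    commutatorInverse hfin y * a - a * commutatorInverse hfin y = y := by
  calc commutatorInverse hfin y * a - a * commutatorInverse hfin y
      = ∑ l ∈ σ, ∑ l' ∈ σ, ((l' - l)⁻¹ * (l' - l)) • (P l * y * P l') := by
        simp only [commutatorInverse, Finset.sum_mul, Finset.mul_sum, ← Finset.sum_sub_distrib,
          smul_mul_assoc, mul_smul_comm, ← smul_sub,
          spectralProjection_mul_mul_spectralProjection_commutator hfin, smul_smul]
    _ = ∑ l ∈ σ, ∑ l' ∈ σ, P l * y * P l' - ∑ l ∈ σ, P l * y * P l := by
        rw [← Finset.sum_sub_distrib]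
        refine Finset.sum_congr rfl fun l hl => ?_
        have hdiag (l' : ℂ) : ((l' - l)⁻¹ * (l' - l)) • (P l * y * P l') =
            P l * y * P l' - if l = l' then P l * y * P l' else 0 := by
          rcases eq_or_ne l l' with rfl | h
          · simp
          · rw [inv_mul_cancel₀ (sub_ne_zero.mpr h.symm), one_smul, if_neg h, sub_zero]
        simp_rw [hdiag]
        rw [Finset.sum_sub_distrib, Finset.sum_ite_eq, if_pos hl]
    _ = y := by
        rw [← pinching_apply, hy, sub_zero, ← Finset.sum_mul_sum, ← Finset.sum_mul,
          sum_spectralProjection hfin, one_mul, mul_one]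

theorem star_commutatorInverse (ha : IsSelfAdjoint a) {y : R} (hy : star y = y) :
    star (commutatorInverse hfin y) = -commutatorInverse hfin y := by
  simp only [commutatorInverse, star_sum, star_smul, star_mul,
    (isSelfAdjoint_spectralProjection a _).star_eq, hy, ← mul_assoc, ← Finset.sum_neg_distrib,
    ← neg_smul]
  rw [Finset.sum_comm]
  refine Finset.sum_congr rfl fun l hl => Finset.sum_congr rfl fun l' hl' => ?_
  rw [star_inv₀, star_sub, Complex.star_def, ha.conj_eq_of_mem_spectrum (hfin.mem_toFinset.mp hl),
    ha.conj_eq_of_mem_spectrum (hfin.mem_toFinset.mp hl'), ← inv_neg, neg_sub]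

end Pinching

theorem isCompactOperator_mul_mul {𝕜 E : Type*} [NontriviallyNormedField 𝕜] [NormedAddCommGroup E]
    [NormedSpace 𝕜 E] (u v : E →L[𝕜] E) {y : E →L[𝕜] E} (hy : IsCompactOperator y) :
    IsCompactOperator (u * y * v) :=
  (hy.comp_clm v).clm_comp u

section FiniteSpectrum

variable {A : H →L[ℂ] H} (hfin : (spectrum ℂ A).Finite)

theorem isCompactOperator_pinching {x : H →L[ℂ] H} (hx : IsCompactOperator x) :
    IsCompactOperator (pinching hfin x) := by
  rw [pinching_apply]
  exact (compactOperator (RingHom.id ℂ) H H).sum_mem fun l _ => isCompactOperator_mul_mul _ _ hx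

theorem isCompactOperator_commutatorInverse {y : H →L[ℂ] H} (hy : IsCompactOperator y) :
    IsCompactOperator (commutatorInverse hfin y : H →L[ℂ] H) :=
  (compactOperator (RingHom.id ℂ) H H).sum_mem fun _ _ => Submodule.sum_mem _ fun _ _ =>
    Submodule.smul_mem _ _ (isCompactOperator_mul_mul _ _ hy)

theorem pinching_mem_Kah {x : H →L[ℂ] H} (hx : x ∈ Kah H) : pinching hfin x ∈ Kah H :=
  ⟨isCompactOperator_pinching hfin hx.1, by rw [star_pinching, hx.2, map_neg]⟩

theorem pinching_mem_Kh {x : H →L[ℂ] H} (hx : x ∈ Kh H) : pinching hfin x ∈ Kh H :=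
  ⟨isCompactOperator_pinching hfin hx.1, by rw [star_pinching, hx.2]⟩

theorem map_deltaMap_Kah (hA : IsSelfAdjoint A) :
    (Kah H).map (deltaMap A) =
      Kh H ⊓ LinearMap.ker (pinching hfin : (H →L[ℂ] H) →ₗ[ℝ] H →L[ℂ] H) := by
  have := hA.isStarNormal
  refine le_antisymm ?_ fun y ⟨⟨hyc, hys⟩, hyE⟩ => ⟨commutatorInverse hfin y,
    ⟨isCompactOperator_commutatorInverse hfin hyc, star_commutatorInverse hfin hA hys⟩,
    commutatorInverse_mul_sub hfin hyE⟩
  rintro _ ⟨x, ⟨hxc, hxs⟩, rfl⟩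
  refine ⟨⟨(hxc.comp_clm A).sub (hxc.clm_comp A), ?_⟩, pinching_mul_sub_mul hfin x⟩
  rw [deltaMap_apply, star_sub, star_mul, star_mul, hA.star_eq, hxs, mul_neg, neg_mul, neg_sub_neg]

theorem ker_deltaMap (hA : IsSelfAdjoint A) :
    LinearMap.ker (deltaMap A) =
      LinearMap.ker ((1 - pinching hfin : (H →L[ℂ] H) →L[ℝ] H →L[ℂ] H) :
        (H →L[ℂ] H) →ₗ[ℝ] H →L[ℂ] H) := by
  have := hA.isStarNormal
  ext x
  rw [LinearMap.mem_ker, LinearMap.mem_ker, deltaMap_eq_zero_iff]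
  change _ ↔ x - pinching hfin x = 0
  rw [sub_eq_zero]
  refine ⟨fun hx => (pinching_eq_self hfin hA hx).symm, fun hx => ?_⟩
  rw [hx]
  exact commute_pinching hfin x

end FiniteSpectrum

/-- Theorem 4.3: `δ_A : K(H)_ah → K(H)_h` has closed range iff the spectrum of `A`
is finite, in which case both its kernel and its range are closed complemented
subspaces (of `K(H)_ah` and `K(H)_h` respectively). -/
theorem stmt10 (A : H →L[ℂ] H) (hA : star A = A) :
    (IsClosed ((Submodule.map (deltaMap A) (Kah H) : Submodule ℝ (H →L[ℂ] H)) :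
        Set (H →L[ℂ] H)) ↔ (spectrum ℂ A).Finite) ∧
    ((spectrum ℂ A).Finite →
      (IsClosed ((Kah H ⊓ LinearMap.ker (deltaMap A) : Submodule ℝ (H →L[ℂ] H)) :
          Set (H →L[ℂ] H)) ∧
        ∃ S : Submodule ℝ (H →L[ℂ] H), S ≤ Kah H ∧ IsClosed (S : Set (H →L[ℂ] H)) ∧
          S ⊓ (Kah H ⊓ LinearMap.ker (deltaMap A)) = ⊥ ∧
          S ⊔ (Kah H ⊓ LinearMap.ker (deltaMap A)) = Kah H) ∧
      (IsClosed ((Submodule.map (deltaMap A) (Kah H) : Submodule ℝ (H →L[ℂ] H)) :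
          Set (H →L[ℂ] H)) ∧
        ∃ T : Submodule ℝ (H →L[ℂ] H), T ≤ Kh H ∧ IsClosed (T : Set (H →L[ℂ] H)) ∧
          T ⊓ Submodule.map (deltaMap A) (Kah H) = ⊥ ∧
          T ⊔ Submodule.map (deltaMap A) (Kah H) = Kh H)) := by
  have hA : IsSelfAdjoint A := hA
  have hrange_closed (hfin : (spectrum ℂ A).Finite) :
      IsClosed ((Kah H).map (deltaMap A) : Set (H →L[ℂ] H)) := by
    rw [map_deltaMap_Kah hfin hA]
    exact (Kh H).isClosed_inf_ker isClosed_Kh (pinching hfin).continuous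
  refine ⟨⟨spectrum_finite_of_isClosed hA, hrange_closed⟩, fun hfin =>
    ⟨⟨(Kah H).isClosed_inf_ker isClosed_Kah (continuous_deltaMap A), ?_⟩, hrange_closed hfin, ?_⟩⟩
  · rw [ker_deltaMap hfin hA]
    exact hasClosedComplementIn_inf_ker (isIdempotentElem_pinching hfin hA).one_sub isClosed_Kah
      fun x hx => (Kah H).sub_mem hx (pinching_mem_Kah hfin hx)
  · rw [map_deltaMap_Kah hfin hA]
    exact hasClosedComplementIn_inf_ker (isIdempotentElem_pinching hfin hA) isClosed_Kh
      fun x hx => pinching_mem_Kh hfin hx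
end
end

section
/- Let A = Σ_{i=1}^n λ_i·p_i be a bounded self-adjoint operator on H with finite spectrum, where λ_1, …, λ_n are distinct real numbers and p_1, …, p_n are mutually orthogonal self-adjoint projections with Σ_{i=1}^n p_i = 1. Then {xA − Ax : x ∈ K(H)} = {z ∈ K(H) : p_i·z·p_i = 0 for i = 1, …, n}, and there exists a constant C > 0 such that C·‖x − P_A(x)‖ ≤ ‖xA − Ax‖ for all x ∈ K(H), where P_A(x) = Σ_{i=1}^n p_i·x·p_i. -/
/-!
Write `δ(x) = x * A - A * x` and `x_ij = p_i x p_j`. Since `A = Σ λ_i p_i`, the commutator acts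
blockwise as `(δ x)_ij = (λ_j - λ_i) x_ij`. Dividing blockwise,
`S y = Σ_{i,j} (λ_j - λ_i)⁻¹ y_ij` inverts `δ` on the off-diagonal part: `S (δ x) = x - P_A x`
and `δ (S y) = y - P_A y`. As the compact operators form a two-sided ideal, `S` preserves compactness, this gives the
range of `δ`; and since `‖p_i‖ ≤ 1`, `S` is bounded, which is the estimate.
-/

noncomputable section

variable {H : Type*} [NormedAddCommGroup H] [InnerProductSpace ℂ H] [CompleteSpace H]

open Finset

namespace CompleteOrthogonalIdempotents

section CommRing

variable {ι k R : Type*} [Fintype ι] [CommRing k] [Ring R] [Algebra k R] {e : ι → R}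

theorem mul_sum_smul (he : CompleteOrthogonalIdempotents e) (c : ι → k) (i : ι) :
    e i * ∑ j, c j • e j = c i • e i := by
  classical
  simp_rw [mul_sum, mul_smul_comm, he.mul_eq, smul_ite, smul_zero, sum_ite_eq, mem_univ, if_true]

theorem sum_smul_mul (he : CompleteOrthogonalIdempotents e) (c : ι → k) (i : ι) :
    (∑ j, c j • e j) * e i = c i • e i := by
  classical
  simp_rw [sum_mul, smul_mul_assoc, he.mul_eq, smul_ite, smul_zero, sum_ite_eq', mem_univ,
    if_true]

theorem sum_sum_mul_mul (he : CompleteOrthogonalIdempotents e) (x : R) :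
    ∑ i, ∑ j, e i * x * e j = x := by
  simp_rw [← mul_sum, ← sum_mul, he.complete, one_mul, mul_one]

theorem mul_commutator_mul (he : CompleteOrthogonalIdempotents e) {c : ι → k} {A : R}
    (hA : A = ∑ l, c l • e l) (x : R) (i j : ι) :
    e i * (x * A - A * x) * e j = (c j - c i) • (e i * x * e j) := by
  have hsplit : e i * (x * A - A * x) * e j = e i * x * (A * e j) - (e i * A) * x * e j := by
    noncomm_ring
  rw [hsplit, hA, he.sum_smul_mul, he.mul_sum_smul, sub_smul, mul_smul_comm, smul_mul_assoc,
    smul_mul_assoc]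

theorem commutator_mul_mul (he : CompleteOrthogonalIdempotents e) {c : ι → k} {A : R}
    (hA : A = ∑ l, c l • e l) (y : R) (i j : ι) :
    e i * y * e j * A - A * (e i * y * e j) = (c j - c i) • (e i * y * e j) := by
  rw [hA, mul_assoc, he.mul_sum_smul, ← mul_assoc, ← mul_assoc, he.sum_smul_mul, sub_smul,
    mul_smul_comm, smul_mul_assoc, smul_mul_assoc]

end CommRing

section Field

variable {ι k R : Type*} [Fintype ι] [Field k] [Ring R] [Algebra k R] {e : ι → R}

/-- The diagonal terms vanish, because `(c i - c i)⁻¹ = 0⁻¹ = 0`. -/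
def commutatorPreimage (e : ι → R) (c : ι → k) (y : R) : R :=
  ∑ i, ∑ j, (c j - c i)⁻¹ • (e i * y * e j)

theorem sum_sum_inv_sub_mul_sub_smul (he : CompleteOrthogonalIdempotents e) {c : ι → k}
    (hc : Function.Injective c) (y : R) :
    ∑ i, ∑ j, ((c j - c i)⁻¹ * (c j - c i)) • (e i * y * e j) = y - ∑ i, e i * y * e i := by
  classical
  have hterm : ∀ i j, ((c j - c i)⁻¹ * (c j - c i)) • (e i * y * e j) =
      e i * y * e j - if i = j then e i * y * e j else 0 := by
    intro i j
    split_ifs with hij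
    · subst hij
      simp
    · rw [inv_mul_cancel₀ (sub_ne_zero.2 (hc.ne (Ne.symm hij))), one_smul, sub_zero]
  simp_rw [hterm, sum_sub_distrib, sum_ite_eq, mem_univ, if_true, he.sum_sum_mul_mul]

theorem commutatorPreimage_commutator (he : CompleteOrthogonalIdempotents e) {c : ι → k}
    (hc : Function.Injective c) {A : R} (hA : A = ∑ l, c l • e l) (x : R) :
    commutatorPreimage e c (x * A - A * x) = x - ∑ i, e i * x * e i := by
  simp_rw [commutatorPreimage, he.mul_commutator_mul hA, smul_smul]
  exact he.sum_sum_inv_sub_mul_sub_smul hc x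

theorem commutator_commutatorPreimage (he : CompleteOrthogonalIdempotents e) {c : ι → k}
    (hc : Function.Injective c) {A : R} (hA : A = ∑ l, c l • e l) (y : R) :
    commutatorPreimage e c y * A - A * commutatorPreimage e c y = y - ∑ i, e i * y * e i := by
  simp_rw [commutatorPreimage, sum_mul, mul_sum, ← sum_sub_distrib, smul_mul_assoc,
    mul_smul_comm, ← smul_sub, he.commutator_mul_mul hA, smul_smul]
  exact he.sum_sum_inv_sub_mul_sub_smul hc y

theorem commutatorPreimage_mem (I : TwoSidedIdeal R) (c : ι → k) {y : R} (hy : y ∈ I) :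
    commutatorPreimage e c y ∈ I := by
  refine sum_mem fun i _ => sum_mem fun j _ => ?_
  rw [Algebra.smul_def]
  exact I.mul_mem_left _ _ (I.mul_mem_right _ _ (I.mul_mem_left _ _ hy))

theorem setOf_commutator_mem_ideal (he : CompleteOrthogonalIdempotents e) {c : ι → k}
    (hc : Function.Injective c) {A : R} (hA : A = ∑ l, c l • e l) (I : TwoSidedIdeal R) :
    {y | ∃ x ∈ I, y = x * A - A * x} = {z | z ∈ I ∧ ∀ i, e i * z * e i = 0} := by
  ext y
  constructor
  · rintro ⟨x, hx, rfl⟩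
    refine ⟨I.sub_mem (I.mul_mem_right _ _ hx) (I.mul_mem_left _ _ hx), fun i => ?_⟩
    rw [he.mul_commutator_mul hA, sub_self, zero_smul]
  · rintro ⟨hy, hdiag⟩
    refine ⟨commutatorPreimage e c y, commutatorPreimage_mem I c hy, ?_⟩
    simp [he.commutator_commutatorPreimage hc hA, hdiag]

end Field

section Normed

variable {ι k R : Type*} [Fintype ι] [NormedField k] [NormedRing R] [NormedAlgebra k R]
  {e : ι → R}

theorem norm_commutatorPreimage_le (he_norm : ∀ i, ‖e i‖ ≤ 1) (c : ι → k) (y : R) :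
    ‖commutatorPreimage e c y‖ ≤ (∑ i, ∑ j, ‖(c j - c i)⁻¹‖) * ‖y‖ := by
  have hblock : ∀ i j, ‖e i * y * e j‖ ≤ ‖y‖ := fun i j =>
    calc ‖e i * y * e j‖ ≤ ‖e i‖ * ‖y‖ * ‖e j‖ := norm_mul₃_le
      _ ≤ 1 * ‖y‖ * 1 := by gcongr <;> exact he_norm _
      _ = ‖y‖ := by ring
  simp_rw [commutatorPreimage, sum_mul]
  refine (norm_sum_le _ _).trans (sum_le_sum fun i _ => (norm_sum_le _ _).trans
    (sum_le_sum fun j _ => ?_))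
  rw [norm_smul]
  gcongr
  exact hblock i j

theorem exists_pos_mul_norm_sub_le_norm_commutator (he : CompleteOrthogonalIdempotents e)
    (he_norm : ∀ i, ‖e i‖ ≤ 1) {c : ι → k} (hc : Function.Injective c) {A : R}
    (hA : A = ∑ l, c l • e l) :
    ∃ C : ℝ, 0 < C ∧ ∀ x : R, C * ‖x - ∑ i, e i * x * e i‖ ≤ ‖x * A - A * x‖ := by
  set M := ∑ i, ∑ j, ‖(c j - c i)⁻¹‖
  have hM : 0 ≤ M := by positivity
  refine ⟨(1 + M)⁻¹, by positivity, fun x => ?_⟩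
  rw [← he.commutatorPreimage_commutator hc hA x, inv_mul_le_iff₀ (by positivity)]
  calc ‖commutatorPreimage e c _‖ ≤ M * ‖x * A - A * x‖ :=
        norm_commutatorPreimage_le he_norm c _
    _ ≤ (1 + M) * ‖x * A - A * x‖ := by gcongr; linarith

end Normed

end CompleteOrthogonalIdempotents

section CompactOperators

variable (𝕜 E : Type*) [NontriviallyNormedField 𝕜] [NormedAddCommGroup E] [NormedSpace 𝕜 E]

def compactOperatorIdeal : TwoSidedIdeal (E →L[𝕜] E) :=
  .mk' {T | IsCompactOperator T} isCompactOperator_zero IsCompactOperator.add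
    IsCompactOperator.neg (fun {S _} hT => hT.clm_comp S) (fun {_ S} hT => hT.comp_clm S)

variable {𝕜 E}

theorem mem_compactOperatorIdeal {T : E →L[𝕜] E} :
    T ∈ compactOperatorIdeal 𝕜 E ↔ IsCompactOperator T :=
  TwoSidedIdeal.mem_mk' _ _ _ _ _ _ T

end CompactOperators

theorem stmt11_general (n : ℕ) (lam : Fin n → ℝ) (hlam : Function.Injective lam)
    (P : Fin n → (H →L[ℂ] H)) (hPsa : ∀ i, star (P i) = P i)
    (hPidem : ∀ i, P i * P i = P i)
    (hPorth : ∀ i j, i ≠ j → P i * P j = 0) (hPsum : ∑ i, P i = 1)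
    (A : H →L[ℂ] H) (hA : A = ∑ i, (lam i : ℂ) • P i) :
    {y : H →L[ℂ] H | ∃ x : H →L[ℂ] H, IsCompactOperator ⇑x ∧ y = x * A - A * x} =
      {z : H →L[ℂ] H | IsCompactOperator ⇑z ∧ ∀ i, P i * z * P i = 0} ∧
    ∃ C : ℝ, 0 < C ∧ ∀ x : H →L[ℂ] H, IsCompactOperator ⇑x →
      C * ‖x - ∑ i, P i * x * P i‖ ≤ ‖x * A - A * x‖ := by
  have hP : CompleteOrthogonalIdempotents P := ⟨⟨hPidem, hPorth⟩, hPsum⟩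
  have hP_norm : ∀ i, ‖P i‖ ≤ 1 := fun i => IsStarProjection.norm_le _ ⟨hPidem i, hPsa i⟩
  have hc : Function.Injective fun i => (lam i : ℂ) := Complex.ofReal_injective.comp hlam
  refine ⟨?_, ?_⟩
  · simpa only [mem_compactOperatorIdeal] using
      hP.setOf_commutator_mem_ideal hc hA (compactOperatorIdeal ℂ H)
  · obtain ⟨C, hC, hbound⟩ := hP.exists_pos_mul_norm_sub_le_norm_commutator hP_norm hc hA
    exact ⟨C, hC, fun x _ => hbound x⟩

/-- For `A = Σ λᵢ pᵢ` self-adjoint with finite spectrum, the range of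
`δ_A(x) = xA - Ax` on compacts consists of the compact operators with zero diagonal
(with respect to the decomposition given by the `pᵢ`), and `δ_A` is bounded below
modulo its kernel: `C‖x - P_A(x)‖ ≤ ‖xA - Ax‖` with `P_A(x) = Σ pᵢ x pᵢ`. -/
theorem stmt11 (n : ℕ) (hn : 0 < n) (lam : Fin n → ℝ) (hlam : Function.Injective lam)
    (P : Fin n → (H →L[ℂ] H)) (hPsa : ∀ i, star (P i) = P i)
    (hPidem : ∀ i, P i * P i = P i)
    (hPorth : ∀ i j, i ≠ j → P i * P j = 0) (hPsum : ∑ i, P i = 1)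
    (A : H →L[ℂ] H) (hA : A = ∑ i, (lam i : ℂ) • P i) :
    {y : H →L[ℂ] H | ∃ x : H →L[ℂ] H, IsCompactOperator ⇑x ∧ y = x * A - A * x} =
      {z : H →L[ℂ] H | IsCompactOperator ⇑z ∧ ∀ i, P i * z * P i = 0} ∧
    ∃ C : ℝ, 0 < C ∧ ∀ x : H →L[ℂ] H, IsCompactOperator ⇑x →
      C * ‖x - ∑ i, P i * x * P i‖ ≤ ‖x * A - A * x‖ :=
  stmt11_general n lam hlam P hPsa hPidem hPorth hPsum A hA
end
end
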